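/- arXiv:2103.05452 — 2 statements merged into one kernel-verified Lean document; each statement's English description precedes it below -/
import Mathlib

section
/- Let G ≤ Aut(T) act spherically transitively on T. Then for every integer s ≥ 1 the s-th Basilica group Bas_s(G) acts spherically transitively on T. -/
/-!
Groups of automorphisms of the `m`-regular rooted tree, encoded via portraits:
an automorphism is determined by the family of its labels (local actions)
`label : List (Fin m) → Equiv.Perm (Fin m)`.
-/

namespace Basilica

/-- An automorphism of the `m`-regular rooted tree, given by its portrait. -/
structure TreeAut (m : ℕ) where
  label : List (Fin m) → Equiv.Perm (Fin m)

namespace TreeAut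

variable {m : ℕ}

lemma ext_label {a b : TreeAut m} (h : ∀ u, a.label u = b.label u) : a = b := by
  cases a
  cases b
  simp only [mk.injEq]
  exact funext h

/-- The section of an automorphism at a vertex. -/
def sec (a : TreeAut m) (v : List (Fin m)) : TreeAut m := ⟨fun u => a.label (v ++ u)⟩

@[simp] lemma sec_label (a : TreeAut m) (v u : List (Fin m)) :
    (a.sec v).label u = a.label (v ++ u) := rfl

@[simp] lemma sec_nil (a : TreeAut m) : a.sec [] = a := rfl

lemma sec_sec (a : TreeAut m) (v w : List (Fin m)) : (a.sec v).sec w = a.sec (v ++ w) :=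
  ext_label fun u => by simp [List.append_assoc]

/-- The action of a tree automorphism on the vertices (finite words). -/
def apply : TreeAut m → List (Fin m) → List (Fin m)
  | _, [] => []
  | a, x :: u => a.label [] x :: (a.sec [x]).apply u

/-- The inverse action of a tree automorphism on the vertices. -/
def invApply : TreeAut m → List (Fin m) → List (Fin m)
  | _, [] => []
  | a, x :: u => (a.label [])⁻¹ x :: (a.sec [(a.label [])⁻¹ x]).invApply u

instance : One (TreeAut m) := ⟨⟨fun _ => 1⟩⟩
instance : Mul (TreeAut m) := ⟨fun a b => ⟨fun u => a.label (b.apply u) * b.label u⟩⟩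
instance : Inv (TreeAut m) := ⟨fun a => ⟨fun u => (a.label (a.invApply u))⁻¹⟩⟩

@[simp] lemma one_label (u : List (Fin m)) : (1 : TreeAut m).label u = 1 := rfl

@[simp] lemma mul_label (a b : TreeAut m) (u : List (Fin m)) :
    (a * b).label u = a.label (b.apply u) * b.label u := rfl

@[simp] lemma inv_label (a : TreeAut m) (u : List (Fin m)) :
    a⁻¹.label u = (a.label (a.invApply u))⁻¹ := rfl

@[simp] lemma one_sec (v : List (Fin m)) : (1 : TreeAut m).sec v = 1 := rfl

@[simp] lemma apply_nil (a : TreeAut m) : a.apply [] = [] := rfl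

lemma apply_cons (a : TreeAut m) (x : Fin m) (u : List (Fin m)) :
    a.apply (x :: u) = a.label [] x :: (a.sec [x]).apply u := rfl

@[simp] lemma one_apply (u : List (Fin m)) : (1 : TreeAut m).apply u = u := by
  induction u with
  | nil => rfl
  | cons x u ih => simp [apply_cons, ih]

lemma apply_append (a : TreeAut m) (v u : List (Fin m)) :
    a.apply (v ++ u) = a.apply v ++ (a.sec v).apply u := by
  induction v generalizing a with
  | nil => simp
  | cons x v ih =>
      simp only [List.cons_append, apply_cons, ih, sec_sec, List.singleton_append,
        List.nil_append]

lemma mul_sec (a b : TreeAut m) (v : List (Fin m)) :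
    (a * b).sec v = a.sec (b.apply v) * b.sec v :=
  ext_label fun u => by simp [apply_append]

lemma mul_apply (a b : TreeAut m) (u : List (Fin m)) :
    (a * b).apply u = a.apply (b.apply u) := by
  induction u generalizing a b with
  | nil => rfl
  | cons x u ih =>
      rw [apply_cons, mul_sec, ih]
      simp [apply_cons, Equiv.Perm.mul_apply]

lemma invApply_apply (a : TreeAut m) (u : List (Fin m)) : a.invApply (a.apply u) = u := by
  induction u generalizing a with
  | nil => rfl
  | cons x u ih => simp [apply_cons, invApply, ih]

lemma apply_invApply (a : TreeAut m) (u : List (Fin m)) : a.apply (a.invApply u) = u := by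
  induction u generalizing a with
  | nil => rfl
  | cons x u ih => simp [invApply, apply_cons, ih]

instance : Group (TreeAut m) where
  mul_assoc a b c := ext_label fun u => by simp [mul_apply, mul_assoc]
  one_mul a := ext_label fun u => by simp
  mul_one a := ext_label fun u => by simp
  inv_mul_cancel a := ext_label fun u => by simp [invApply_apply]

lemma apply_injective (a : TreeAut m) : Function.Injective a.apply := by
  intro x y h
  have hx := invApply_apply a x
  rw [h, invApply_apply] at hx
  exact hx.symm

@[simp] lemma apply_length (a : TreeAut m) (u : List (Fin m)) :
    (a.apply u).length = u.length := by
  induction u generalizing a with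
  | nil => rfl
  | cons x u ih => simp [apply_cons, ih]

/-- `cons ρ f` is `ρ · ψ₁⁻¹(f 0, …, f (m-1))`: the automorphism with root label `ρ`
and first-layer sections `f x`. -/
def cons (ρ : Equiv.Perm (Fin m)) (f : Fin m → TreeAut m) : TreeAut m :=
  ⟨fun u =>
    match u with
    | [] => ρ
    | x :: v => (f x).label v⟩

end TreeAut

variable {m : ℕ}

/-- The `n`-th layer stabiliser `St_G(n)` of a group `G` of tree automorphisms. -/
def layerStab (G : Subgroup (TreeAut m)) (n : ℕ) : Subgroup (TreeAut m) where
  carrier := {g | g ∈ G ∧ ∀ u : List (Fin m), u.length = n → g.apply u = u}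
  one_mem' := ⟨G.one_mem, fun u _ => TreeAut.one_apply u⟩
  mul_mem' := by
    rintro a b ⟨haG, ha⟩ ⟨hbG, hb⟩
    refine ⟨G.mul_mem haG hbG, fun u hu => ?_⟩
    rw [TreeAut.mul_apply, hb u hu, ha u hu]
  inv_mem' := by
    rintro a ⟨haG, ha⟩
    refine ⟨G.inv_mem haG, fun u hu => ?_⟩
    apply TreeAut.apply_injective a
    rw [← TreeAut.mul_apply, mul_inv_cancel, TreeAut.one_apply, ha u hu]

/-- A group of tree automorphisms acts spherically transitively if it acts
transitively on every layer. -/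
def SphericallyTransitive (G : Subgroup (TreeAut m)) : Prop :=
  ∀ u v : List (Fin m), u.length = v.length → ∃ g ∈ G, g.apply u = v

/-- A group of tree automorphisms is self-similar if it is closed under sections. -/
def SelfSimilar (G : Subgroup (TreeAut m)) : Prop :=
  ∀ g ∈ G, ∀ v : List (Fin m), g.sec v ∈ G

/-- A spherically transitive group is fractal if `st_G(u)|_u = G` for all vertices `u`. -/
def Fractal (G : Subgroup (TreeAut m)) : Prop :=
  SphericallyTransitive G ∧
    ∀ u : List (Fin m),
      {h : TreeAut m | ∃ g ∈ G, g.apply u = u ∧ g.sec u = h} = (G : Set (TreeAut m))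

/-- A spherically transitive group is strongly fractal if `St_G(1)|_x = G` for all `x ∈ X`. -/
def StronglyFractal (G : Subgroup (TreeAut m)) : Prop :=
  SphericallyTransitive G ∧
    ∀ x : Fin m,
      {h : TreeAut m | ∃ g ∈ layerStab G 1, g.sec [x] = h} = (G : Set (TreeAut m))

/-- A spherically transitive group is very strongly fractal if
`St_G(n+1)|_x = St_G(n)` for all `n` and `x ∈ X`. -/
def VeryStronglyFractal (G : Subgroup (TreeAut m)) : Prop :=
  SphericallyTransitive G ∧
    ∀ (n : ℕ) (x : Fin m),
      {h : TreeAut m | ∃ g ∈ layerStab G (n + 1), g.sec [x] = h}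
        = (layerStab G n : Set (TreeAut m))

/-- A group of tree automorphisms is contracting if it has a finite nucleus. -/
def Contracting (G : Subgroup (TreeAut m)) : Prop :=
  ∃ N : Set (TreeAut m), N.Finite ∧ N ⊆ (G : Set (TreeAut m)) ∧
    ∀ g ∈ G, ∃ k : ℕ, ∀ v : List (Fin m), k < v.length → g.sec v ∈ N

/-- A tree automorphism is finite-state if it has finitely many distinct sections. -/
def FiniteState (f : TreeAut m) : Prop :=
  {h : TreeAut m | ∃ u : List (Fin m), f.sec u = h}.Finite

/-- A tree automorphism is bounded if the number of nontrivial sections at the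
`n`-th layer is bounded uniformly in `n`. -/
def BoundedAut (f : TreeAut m) : Prop :=
  ∃ C : ℕ, ∀ n : ℕ, {u : List (Fin m) | u.length = n ∧ f.sec u ≠ 1}.ncard ≤ C

/-- The `n`-th rigid layer stabiliser: the subgroup generated by the rigid vertex
stabilisers of the vertices of the `n`-th layer. -/
def rigidLayerStab (G : Subgroup (TreeAut m)) (n : ℕ) : Subgroup (TreeAut m) :=
  Subgroup.closure {g | g ∈ G ∧ ∃ v : List (Fin m), v.length = n ∧
    ∀ u : List (Fin m), ¬ v <+: u → g.apply u = u}

/-- A weakly branch group: spherically transitive with nontrivial rigid layer stabilisers. -/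
def WeaklyBranch (G : Subgroup (TreeAut m)) : Prop :=
  SphericallyTransitive G ∧ ∀ n : ℕ, rigidLayerStab G n ≠ ⊥

/-- `H` is weakly regular branch over `K ≤ H` if `ψ₁(St_K(1)) ⊇ K × ⋯ × K`. -/
def WeaklyRegularBranchOver (H K : Subgroup (TreeAut m)) : Prop :=
  K ≤ H ∧ ∀ f : Fin m → TreeAut m, (∀ x, f x ∈ K) → TreeAut.cons 1 f ∈ K

/-- The portrait of the `i`-th Basilica monomorphism `β^s_i` applied to `g`,
computed by recursion over vertices. -/
def betaLabel [NeZero m] (s : ℕ) : List (Fin m) → ℕ → TreeAut m → Equiv.Perm (Fin m)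
  | [], i, g => if i = 0 then g.label [] else 1
  | x :: u, i, g =>
      if i = 0 then betaLabel s u (s - 1) (g.sec [x])
      else if x = 0 then betaLabel s u (i - 1) g else 1

/-- The Basilica monomorphism `β^s_i : Aut(T) → Aut(T)`, satisfying
`β_i(g) = ψ₁⁻¹(β_{i-1}(g), 1, …, 1)` for `1 ≤ i ≤ s-1` and
`β_0(g) = g|^ε · ψ₁⁻¹(β_{s-1}(g|_0), …, β_{s-1}(g|_{m-1}))`. -/
def betaAut [NeZero m] (s i : ℕ) (g : TreeAut m) : TreeAut m := ⟨fun u => betaLabel s u i g⟩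

/-- The `s`-th Basilica group of `G`. -/
def basilica [NeZero m] (s : ℕ) (G : Subgroup (TreeAut m)) : Subgroup (TreeAut m) :=
  Subgroup.closure {b | ∃ g ∈ G, ∃ i < s, b = betaAut s i g}

/-- The subgroup `S_i = ⟨β_j(G) : j ≠ i⟩` of the `s`-th Basilica group. -/
def Ssub [NeZero m] (s i : ℕ) (G : Subgroup (TreeAut m)) : Subgroup (TreeAut m) :=
  Subgroup.closure {b | ∃ g ∈ G, ∃ j < s, j ≠ i ∧ b = betaAut s j g}

/-- The normal closure `N_i` of `S_i` in the `s`-th Basilica group of `G`. -/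
def Nsub [NeZero m] (s i : ℕ) (G : Subgroup (TreeAut m)) : Subgroup (TreeAut m) :=
  Subgroup.closure {x | ∃ b ∈ basilica s G, ∃ y ∈ Ssub s i G, x = b * y * b⁻¹}

/-- The `i`-th splitting kernel `K_i = β_i⁻¹(β_i(G) ∩ N_i)` of `G`, as a set. -/
def Kset [NeZero m] (s i : ℕ) (G : Subgroup (TreeAut m)) : Set (TreeAut m) :=
  {g | g ∈ G ∧ betaAut s i g ∈ Nsub s i G}

/-- The portrait of the monomorphism `π_i` (for the `d`-fold diagonal construction). -/
def piLabel (d : ℕ) : List (Fin m) → ℕ → TreeAut m → Equiv.Perm (Fin m)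
  | [], i, g => if i = 0 then g.label [] else 1
  | x :: u, i, g =>
      if i = 0 then piLabel d u (d - 1) (g.sec [x])
      else piLabel d u (i - 1) g

/-- The monomorphism `π_i : Aut(T) → Aut(T)`, satisfying
`π_0(g) = g|^ε · ψ₁⁻¹(π_{d-1}(g|_0), …, π_{d-1}(g|_{m-1}))` and
`π_i(g) = ψ₁⁻¹(π_{i-1}(g), …, π_{i-1}(g))` for `1 ≤ i ≤ d-1`. -/
def piAut (d i : ℕ) (g : TreeAut m) : TreeAut m := ⟨fun u => piLabel d u i g⟩

/-- The generator of the `m`-adic odometer: `a = σ · ψ₁⁻¹(a, 1, …, 1)` with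
`σ = (0 1 … m-1)`. -/
def odometer (m : ℕ) [NeZero m] : TreeAut m :=
  ⟨fun u => if ∀ x ∈ u, x = 0 then finRotate m else 1⟩

/-- The group `O_m^d = D_d(O_m) = ⟨π_i(a) : 0 ≤ i ≤ d-1⟩`. -/
def OdPow (m d : ℕ) [NeZero m] : Subgroup (TreeAut m) :=
  Subgroup.closure {x | ∃ i < d, x = piAut d i (odometer m)}

/-- The group `Γ` of all automorphisms all of whose labels are powers of the
cycle `σ = (0 1 … m-1)`. -/
def Gamma (m : ℕ) : Subgroup (TreeAut m) where
  carrier := {g | ∀ u : List (Fin m), g.label u ∈ Subgroup.zpowers (finRotate m)}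
  one_mem' := by
    intro u
    rw [TreeAut.one_label]
    exact one_mem _
  mul_mem' := by
    intro a b ha hb u
    rw [TreeAut.mul_label]
    exact mul_mem (ha _) (hb _)
  inv_mem' := by
    intro a ha u
    rw [TreeAut.inv_label]
    exact inv_mem (ha _)

/-- The Hausdorff dimension of `G ≤ Γ` relative to `Γ`. -/
noncomputable def hdim (m : ℕ) (G : Subgroup (TreeAut m)) : ℝ :=
  Filter.liminf (fun n : ℕ =>
    Real.logb m ((layerStab G n).relIndex G) /
      Real.logb m ((layerStab (Gamma m) n).relIndex (Gamma m))) Filter.atTop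

/-- The series of obstructions `o_G(n) = m·log_m|L_G(n-1)| - log_m|L_G(n)|` (for `n ≥ 1`),
where `L_G(n) = St_G(n)/St_G(n+1)`. -/
noncomputable def obstruction (m : ℕ) (G : Subgroup (TreeAut m)) (n : ℕ) : ℝ :=
  m * Real.logb m ((layerStab G n).relIndex (layerStab G (n - 1)))
    - Real.logb m ((layerStab G (n + 1)).relIndex (layerStab G n))

/-- The permutation group induced by `G` on the first layer acts regularly on `X`. -/
def RegularRootAction (G : Subgroup (TreeAut m)) : Prop :=
  (∀ x y : Fin m, ∃ g ∈ G, g.label [] x = y) ∧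
    ∀ g ∈ G, ∀ x : Fin m, g.label [] x = x → g.label [] = 1


/-!
The argument runs through the group generated by `β_i(G_i)` for a family of groups
`G_0, …, G_{s-1}`. On the first layer `β_0(g)` acts as `g`, and `β_i(g)` fixes `0` for
`i ≠ 0`. Taking sections at `0` of the stabiliser of `0`, the generators `β_i(G_i)` yield
`β_{i-1}(G_i)`, and `β_0(st_{G_0}(0))` yields `β_{s-1}(st_{G_0}(0)|_0)`: so the stabiliser
of `0` restricts at `0` to the group of the shifted family `G_1, …, G_{s-1}, st_{G_0}(0)|_0`,
which is again spherically transitive. Transitivity on the first layer together with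
transitivity of this restriction on layer `n` gives transitivity on layer `n + 1`.
-/

open TreeAut

def LayerTransitive (H : Subgroup (TreeAut m)) (n : ℕ) : Prop :=
  ∀ u v : List (Fin m), u.length = n → v.length = n → ∃ g ∈ H, g.apply u = v

lemma sphericallyTransitive_iff_forall_layerTransitive {H : Subgroup (TreeAut m)} :
    SphericallyTransitive H ↔ ∀ n, LayerTransitive H n :=
  ⟨fun hH _ u v hu hv => hH u v (hu.trans hv.symm),
    fun hH u v huv => hH u.length u v rfl huv.symm⟩

lemma LayerTransitive.mono {H K : Subgroup (TreeAut m)} {n : ℕ} (hHK : H ≤ K)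
    (hH : LayerTransitive H n) : LayerTransitive K n := fun u v hu hv =>
  let ⟨g, hg, hgu⟩ := hH u v hu hv
  ⟨g, hHK hg, hgu⟩

lemma layerTransitive_zero (H : Subgroup (TreeAut m)) : LayerTransitive H 0 := by
  intro u v hu hv
  rw [List.length_eq_zero_iff.mp hu, List.length_eq_zero_iff.mp hv]
  exact ⟨1, H.one_mem, one_apply []⟩

lemma apply_inv_apply (g : TreeAut m) (u : List (Fin m)) : g.apply (g⁻¹.apply u) = u := by
  rw [← mul_apply, mul_inv_cancel, one_apply]

/-- The restriction `st_H(v)|_v` of the stabiliser of the vertex `v` to the subtree at `v`. -/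
def vertexStabSec (H : Subgroup (TreeAut m)) (v : List (Fin m)) : Subgroup (TreeAut m) where
  carrier := {k | ∃ g ∈ H, g.apply v = v ∧ g.sec v = k}
  one_mem' := ⟨1, H.one_mem, one_apply v, rfl⟩
  mul_mem' := by
    rintro _ _ ⟨g, hg, hgv, rfl⟩ ⟨g', hg', hg'v, rfl⟩
    exact ⟨g * g', H.mul_mem hg hg', by rw [mul_apply, hg'v, hgv], by rw [mul_sec, hg'v]⟩
  inv_mem' := by
    rintro _ ⟨g, hg, hgv, rfl⟩
    have hinv : g⁻¹.apply v = v := by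
      conv_lhs => rw [← hgv]
      rw [← mul_apply, inv_mul_cancel, one_apply]
    have hsec := mul_sec g⁻¹ g v
    rw [inv_mul_cancel, hgv, one_sec] at hsec
    exact ⟨g⁻¹, H.inv_mem hg, hinv, eq_inv_of_mul_eq_one_left hsec.symm⟩

lemma SphericallyTransitive.vertexStabSec {H : Subgroup (TreeAut m)}
    (hH : SphericallyTransitive H) (v : List (Fin m)) :
    SphericallyTransitive (vertexStabSec H v) := by
  intro w t hwt
  obtain ⟨g, hg, hgvw⟩ := hH (v ++ w) (v ++ t) (by simp [hwt])
  rw [apply_append] at hgvw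
  obtain ⟨hgv, hgw⟩ := List.append_inj hgvw (apply_length g v)
  exact ⟨g.sec v, ⟨g, hg, hgv, rfl⟩, hgw⟩

lemma LayerTransitive.add {H : Subgroup (TreeAut m)} {v : List (Fin m)} {k n : ℕ}
    (hv : v.length = k) (hH : LayerTransitive H k)
    (hHv : LayerTransitive (vertexStabSec H v) n) : LayerTransitive H (k + n) := by
  intro u u' hu hu'
  obtain ⟨a, ha, hau⟩ := hH (u.take k) v (by simp [hu]) hv
  obtain ⟨b, hb, hbu'⟩ := hH (u'.take k) v (by simp [hu']) hv
  obtain ⟨_, ⟨g, hg, hgv, rfl⟩, hgw⟩ :=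
    hHv ((a.sec (u.take k)).apply (u.drop k)) ((b.sec (u'.take k)).apply (u'.drop k))
      (by simp [hu]) (by simp [hu'])
  have hau' : a.apply u = v ++ (a.sec (u.take k)).apply (u.drop k) := by
    rw [← hau, ← apply_append, List.take_append_drop]
  have hbu'' : b.apply u' = v ++ (b.sec (u'.take k)).apply (u'.drop k) := by
    rw [← hbu', ← apply_append, List.take_append_drop]
  have hgau : g.apply (a.apply u) = b.apply u' := by
    rw [hau', hbu'', apply_append, hgv, hgw]
  refine ⟨b⁻¹ * g * a, H.mul_mem (H.mul_mem (H.inv_mem hb) hg) ha, b.apply_injective ?_⟩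
  rw [mul_apply, mul_apply, hgau, apply_inv_apply]

section Family

variable [NeZero m]

lemma betaAut_label_nil_of_ne_zero (s : ℕ) {i : ℕ} (hi : i ≠ 0) (g : TreeAut m) :
    (betaAut s i g).label [] = 1 := by
  simp [betaAut, betaLabel, hi]

lemma betaAut_zero_sec_singleton (s : ℕ) (g : TreeAut m) (x : Fin m) :
    (betaAut s 0 g).sec [x] = betaAut s (s - 1) (g.sec [x]) := rfl

lemma betaAut_sec_zero_of_ne_zero (s : ℕ) {i : ℕ} (hi : i ≠ 0) (g : TreeAut m) :
    (betaAut s i g).sec [0] = betaAut s (i - 1) g :=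
  ext_label fun u => by simp [betaAut, betaLabel, hi]

lemma betaAut_zero_apply_singleton (s : ℕ) (g : TreeAut m) (x : Fin m) :
    (betaAut s 0 g).apply [x] = g.apply [x] := rfl

def familyBasilica (s : ℕ) (Gs : ℕ → Subgroup (TreeAut m)) : Subgroup (TreeAut m) :=
  Subgroup.closure {b | ∃ i < s, ∃ g ∈ Gs i, b = betaAut s i g}

lemma basilica_eq_familyBasilica (s : ℕ) (G : Subgroup (TreeAut m)) :
    basilica s G = familyBasilica s (fun _ => G) := by
  simp only [basilica, familyBasilica]
  congr 1
  ext b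
  exact ⟨fun ⟨g, hg, i, hi, hb⟩ => ⟨i, hi, g, hg, hb⟩, fun ⟨i, hi, g, hg, hb⟩ => ⟨g, hg, i, hi, hb⟩⟩

def shiftFamily (s : ℕ) (Gs : ℕ → Subgroup (TreeAut m)) (i : ℕ) : Subgroup (TreeAut m) :=
  if i = s - 1 then vertexStabSec (Gs 0) [0] else Gs (i + 1)

lemma SphericallyTransitive.shiftFamily {s : ℕ} {Gs : ℕ → Subgroup (TreeAut m)}
    (hGs : ∀ i < s, SphericallyTransitive (Gs i)) :
    ∀ i < s, SphericallyTransitive (shiftFamily s Gs i) := by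
  intro i hi
  unfold Basilica.shiftFamily
  split_ifs with h
  · exact (hGs 0 (by omega)).vertexStabSec [0]
  · exact hGs (i + 1) (by omega)

lemma familyBasilica_shiftFamily_le (s : ℕ) (Gs : ℕ → Subgroup (TreeAut m)) :
    familyBasilica s (shiftFamily s Gs) ≤ vertexStabSec (familyBasilica s Gs) [0] := by
  rw [familyBasilica, Subgroup.closure_le]
  rintro _ ⟨i, hi, g, hg, rfl⟩
  unfold shiftFamily at hg
  split_ifs at hg with h
  · obtain ⟨g₀, hg₀, hg₀0, rfl⟩ := hg
    refine ⟨betaAut s 0 g₀, Subgroup.subset_closure ⟨0, by omega, g₀, hg₀, rfl⟩, ?_, ?_⟩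
    · rwa [betaAut_zero_apply_singleton]
    · rw [betaAut_zero_sec_singleton, h]
  · refine ⟨betaAut s (i + 1) g, Subgroup.subset_closure ⟨i + 1, by omega, g, hg, rfl⟩, ?_, ?_⟩
    · rw [apply_cons, betaAut_label_nil_of_ne_zero s i.succ_ne_zero]
      rfl
    · rw [betaAut_sec_zero_of_ne_zero s i.succ_ne_zero, Nat.succ_sub_one]

lemma familyBasilica_layerTransitive_one {s : ℕ} (hs : 0 < s) {Gs : ℕ → Subgroup (TreeAut m)}
    (hG₀ : LayerTransitive (Gs 0) 1) : LayerTransitive (familyBasilica s Gs) 1 := by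
  intro u v hu hv
  obtain ⟨x, rfl⟩ := List.length_eq_one_iff.mp hu
  obtain ⟨g, hg, hgx⟩ := hG₀ [x] v rfl hv
  exact ⟨betaAut s 0 g, Subgroup.subset_closure ⟨0, hs, g, hg, rfl⟩, hgx⟩

lemma familyBasilica_layerTransitive {s : ℕ} (hs : 0 < s) {Gs : ℕ → Subgroup (TreeAut m)}
    (hGs : ∀ i < s, SphericallyTransitive (Gs i)) (n : ℕ) :
    LayerTransitive (familyBasilica s Gs) n := by
  induction n generalizing Gs with
  | zero => exact layerTransitive_zero _
  | succ n ih =>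
    rw [Nat.add_comm]
    refine LayerTransitive.add (v := [0]) rfl ?_ ?_
    · exact familyBasilica_layerTransitive_one hs
        (sphericallyTransitive_iff_forall_layerTransitive.mp (hGs 0 hs) 1)
    · exact (ih (SphericallyTransitive.shiftFamily hGs)).mono
        (familyBasilica_shiftFamily_le s Gs)

end Family

theorem basilica_sphericallyTransitive_general {m : ℕ} [NeZero m]
    (G : Subgroup (TreeAut m)) (hG : SphericallyTransitive G)
    (s : ℕ) (hs : 1 ≤ s) :
    SphericallyTransitive (basilica s G) := by
  rw [basilica_eq_familyBasilica, sphericallyTransitive_iff_forall_layerTransitive]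
  exact familyBasilica_layerTransitive hs fun _ _ => hG

/-- If `G ≤ Aut(T)` acts spherically transitively on `T`, then for every
`s ≥ 1` the `s`-th Basilica group `Bas_s(G)` acts spherically transitively on `T`. -/
theorem basilica_sphericallyTransitive {m : ℕ} [NeZero m] (hm : 2 ≤ m)
    (G : Subgroup (TreeAut m)) (hG : SphericallyTransitive G)
    (s : ℕ) (hs : 1 ≤ s) :
    SphericallyTransitive (basilica s G) :=
  basilica_sphericallyTransitive_general G hG s hs

end Basilica
end

section
/- Let G ≤ Aut(T) be self-similar and contracting. Then for every integer s ≥ 1 the s-th Basilica group Bas_s(G) is contracting. -/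
/-!
Groups of automorphisms of the `m`-regular rooted tree, encoded via portraits:
an automorphism is determined by the family of its labels (local actions)
`label : List (Fin m) → Equiv.Perm (Fin m)`.
-/

namespace Basilica

variable {m : ℕ}

/-!
Write the elements of `Bas_s(G)` as words in the letters `β_i(g)`, `g ∈ G`, `i < s`. The section of
a word at a vertex `x` of the first layer is again a word, no longer than the original one:
`β_0(g)` becomes `β_{s-1}(g|_x)`, and `β_i(g)`, `i ≠ 0`, becomes `β_{i-1}(g)` or disappears. If
some direction keeps all letters of a word, then so does the direction `dir` read off its leading
block of letters of index `0`, and in every other direction the section collapses to a single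
letter `β_{s-1}(h)`. So, by induction on the length, only the *stable* words, which keep all their
letters along the path of these directions, need attention. Along that path the products, for each
index `j`, of all letters of index `j` and of the leading block of such letters are merely shifted
and replaced by sections of themselves, so they eventually lie in the nucleus of `G`; as they
determine the stable word, finitely many stable words arise.
-/

namespace TreeAut

lemma label_cons (a : TreeAut m) (x : Fin m) (u : List (Fin m)) :
    a.label (x :: u) = (a.sec [x]).label u := rfl

lemma sec_cons (a : TreeAut m) (x : Fin m) (w : List (Fin m)) :
    a.sec (x :: w) = (a.sec [x]).sec w :=
  (sec_sec a [x] w).symm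

lemma label_nil_mul (a b : TreeAut m) : (a * b).label [] = a.label [] * b.label [] := rfl

lemma mul_sec_singleton (a b : TreeAut m) (x : Fin m) :
    (a * b).sec [x] = a.sec [b.label [] x] * b.sec [x] :=
  mul_sec a b [x]

lemma eq_of_bisim (r : TreeAut m → TreeAut m → Prop)
    (hr : ∀ a b, r a b → a.label [] = b.label [] ∧ ∀ x, r (a.sec [x]) (b.sec [x]))
    {a b : TreeAut m} (hab : r a b) : a = b := by
  refine ext_label fun u => ?_
  induction u generalizing a b with
  | nil => exact (hr a b hab).1
  | cons x u ih => exact ih ((hr a b hab).2 x)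

end TreeAut

def SectionsEventuallyIn (E : Set (TreeAut m)) (a : TreeAut m) : Prop :=
  ∃ k, ∀ v : List (Fin m), k < v.length → a.sec v ∈ E

lemma sectionsEventuallyIn_of_forall_sec {E : Set (TreeAut m)} {a : TreeAut m}
    (h : ∀ x : Fin m, SectionsEventuallyIn E (a.sec [x])) : SectionsEventuallyIn E a := by
  choose k hk using h
  obtain ⟨K, hK⟩ := Finite.exists_le k
  refine ⟨K + 1, fun v hv => ?_⟩
  obtain ⟨x, w, rfl⟩ := List.exists_cons_of_length_pos (by omega : 0 < v.length)
  rw [TreeAut.sec_cons]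
  exact hk x w (by have := hK x; simp only [List.length_cons] at hv; omega)

lemma one_mem_of_sectionsEventuallyIn [NeZero m] {E : Set (TreeAut m)}
    (h : SectionsEventuallyIn E 1) : (1 : TreeAut m) ∈ E := by
  obtain ⟨k, hk⟩ := h
  simpa using hk (List.replicate (k + 1) 0) (by simp)

section Beta

variable [NeZero m] (s : ℕ)

lemma betaAut_label_nil (i : ℕ) (g : TreeAut m) :
    (betaAut s i g).label [] = if i = 0 then g.label [] else 1 := rfl

lemma betaAut_sec_singleton (i : ℕ) (g : TreeAut m) (x : Fin m) :
    (betaAut s i g).sec [x] =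
      if i = 0 then betaAut s (s - 1) (g.sec [x])
      else if x = 0 then betaAut s (i - 1) g else 1 := by
  refine TreeAut.ext_label fun u => ?_
  split_ifs <;> simp_all [betaAut, betaLabel]

lemma betaAut_one (i : ℕ) : betaAut s i (1 : TreeAut m) = 1 := by
  refine TreeAut.eq_of_bisim (fun a b => a = b ∨ ∃ i, a = betaAut s i 1 ∧ b = 1) ?_
    (.inr ⟨i, rfl, rfl⟩)
  rintro a b (rfl | ⟨i, rfl, rfl⟩)
  · exact ⟨rfl, fun _ => .inl rfl⟩
  · refine ⟨by simp [betaAut_label_nil], fun x => ?_⟩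
    rw [betaAut_sec_singleton]
    split_ifs
    · exact .inr ⟨s - 1, rfl, rfl⟩
    · exact .inr ⟨i - 1, rfl, rfl⟩
    · exact .inl rfl

lemma betaAut_mul (i : ℕ) (g h : TreeAut m) :
    betaAut s i (g * h) = betaAut s i g * betaAut s i h := by
  refine TreeAut.eq_of_bisim (fun a b => a = b ∨ ∃ i g h,
    a = betaAut s i (g * h) ∧ b = betaAut s i g * betaAut s i h) ?_ (.inr ⟨i, g, h, rfl, rfl⟩)
  rintro a b (rfl | ⟨i, g, h, rfl, rfl⟩)
  · exact ⟨rfl, fun _ => .inl rfl⟩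
  · refine ⟨by by_cases hi : i = 0 <;> simp [betaAut_label_nil, hi], fun x => ?_⟩
    rw [TreeAut.mul_sec_singleton, betaAut_sec_singleton, betaAut_sec_singleton,
      betaAut_sec_singleton, betaAut_label_nil, TreeAut.mul_sec_singleton]
    by_cases hi : i = 0
    · simp only [hi, if_true]
      exact .inr ⟨s - 1, _, _, rfl, rfl⟩
    · simp only [hi, if_false, Equiv.Perm.one_apply]
      split_ifs
      · exact .inr ⟨i - 1, g, h, rfl, rfl⟩
      · exact .inl (mul_one 1).symm

lemma betaAut_inv (i : ℕ) (g : TreeAut m) : betaAut s i g⁻¹ = (betaAut s i g)⁻¹ :=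
  eq_inv_of_mul_eq_one_left (by rw [← betaAut_mul, inv_mul_cancel, betaAut_one])

end Beta

section Families

variable {s : ℕ} {N : Set (TreeAut m)} {n : ℕ} {f f' : ℕ → TreeAut m} {x : Fin m}

/-- The way the partial products `Word.indexProd` and `Word.leadProd` of a word change when it
passes to a section. -/
def IsShift (s : ℕ) (x : Fin m) (f' f : ℕ → TreeAut m) : Prop :=
  (∀ j, j + 1 < s → f' j = f (j + 1)) ∧ f' (s - 1) = (f 0).sec [x]

lemma IsShift.eq_of_eq {f₁ f₁' f₂ f₂' : ℕ → TreeAut m} {x₁ x₂ : Fin m}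
    (h₁ : IsShift s x₁ f₁' f₁) (h₂ : IsShift s x₂ f₂' f₂) (hx : x₁ = x₂)
    (h : ∀ j < s, f₁ j = f₂ j) : ∀ j < s, f₁' j = f₂' j := by
  subst hx
  intro j hj
  by_cases hj1 : j + 1 < s
  · rw [h₁.1 j hj1, h₂.1 j hj1, h (j + 1) hj1]
  · obtain rfl : j = s - 1 := by omega
    rw [h₁.2, h₂.2, h 0 (by omega)]

/-- Any `n` or more shifts (`IsShift`) bring every entry of `f` into `N`: shifting sections the
entry of index `j` first after `j + 1` steps and then once every `s` steps. -/
def DeepSectionsIn (s : ℕ) (N : Set (TreeAut m)) (n : ℕ) (f : ℕ → TreeAut m) : Prop :=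
  ∀ j < s, ∀ u : List (Fin m), n ≤ s * u.length + j → (f j).sec u ∈ N

lemma DeepSectionsIn.mem (hf : DeepSectionsIn s N 0 f) {j : ℕ} (hj : j < s) : f j ∈ N :=
  hf j hj [] (Nat.zero_le _)

lemma DeepSectionsIn.mono (hf : DeepSectionsIn s N n f) {n' : ℕ} (hn : n ≤ n') :
    DeepSectionsIn s N n' f :=
  fun j hj u hu => hf j hj u (hn.trans hu)

lemma DeepSectionsIn.of_isShift (hf : DeepSectionsIn s N (n + 1) f) (h : IsShift s x f' f) :
    DeepSectionsIn s N n f' := by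
  intro j hj u hu
  by_cases hj1 : j + 1 < s
  · rw [h.1 j hj1]
    exact hf (j + 1) hj1 u (by omega)
  · obtain rfl : j = s - 1 := by omega
    rw [h.2, ← TreeAut.sec_cons]
    exact hf 0 (by omega) (x :: u) (by simp only [List.length_cons, Nat.mul_succ]; omega)

lemma DeepSectionsIn.single (hf : DeepSectionsIn s N (n + 1) f) (h1 : 1 ∈ N) :
    DeepSectionsIn s N n (fun j => if s - 1 = j then (f 0).sec [x] else 1) := by
  intro j hj u hu
  dsimp only
  split_ifs with hj1
  · rw [← TreeAut.sec_cons]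
    exact hf 0 (by omega) (x :: u) (by simp only [List.length_cons, Nat.mul_succ]; omega)
  · exact h1

lemma exists_deepSectionsIn (hf : ∀ j < s, SectionsEventuallyIn N (f j)) :
    ∃ n, DeepSectionsIn s N n f := by
  choose k hk using fun j : Fin s => hf j j.2
  obtain ⟨K, hK⟩ := Finite.exists_le k
  refine ⟨s * (K + 1), fun j hj u hu => hk ⟨j, hj⟩ u ?_⟩
  have hlt : s * (K + 1) < s * (u.length + 1) := by rw [Nat.mul_succ s u.length]; omega
  have := Nat.lt_of_mul_lt_mul_left hlt
  have := hK ⟨j, hj⟩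
  omega

end Families

/-- The word `[(i₁, g₁), …, (iₖ, gₖ)]` stands for `β_{iₖ}(gₖ) ⋯ β_{i₁}(g₁)`; its head letter acts
first. -/
abbrev Word (m : ℕ) := List (ℕ × TreeAut m)

namespace Word

section

variable (s : ℕ)

def indexProd : Word m → ℕ → TreeAut m
  | [], _ => 1
  | p :: R, j => if p.1 = j then indexProd R j * p.2 else indexProd R j

def leadProd : Word m → ℕ → TreeAut m
  | [], _ => 1
  | p :: R, j => if p.1 = j then leadProd R j * p.2 else 1

def IsOver (G : Subgroup (TreeAut m)) (R : Word m) : Prop :=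
  ∀ p ∈ R, p.1 < s ∧ p.2 ∈ G

variable {s} {G : Subgroup (TreeAut m)} {R : Word m}

lemma indexProd_singleton (i : ℕ) (g : TreeAut m) :
    indexProd [(i, g)] = fun j => if i = j then g else 1 :=
  funext fun j => by simp [indexProd]

lemma leadProd_singleton (i : ℕ) (g : TreeAut m) :
    leadProd [(i, g)] = fun j => if i = j then g else 1 :=
  funext fun j => by simp [leadProd]

lemma IsOver.tail {p : ℕ × TreeAut m} (h : IsOver s G (p :: R)) : IsOver s G R :=
  fun q hq => h q (List.mem_cons_of_mem p hq)

lemma IsOver.indexProd_mem (h : IsOver s G R) (j : ℕ) : indexProd R j ∈ G := by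
  induction R with
  | nil => exact one_mem G
  | cons p R ih =>
      by_cases hj : p.1 = j
      · simpa [indexProd, hj] using mul_mem (ih h.tail) (h p List.mem_cons_self).2
      · simpa [indexProd, hj] using ih h.tail

lemma IsOver.leadProd_mem (h : IsOver s G R) (j : ℕ) : leadProd R j ∈ G := by
  induction R with
  | nil => exact one_mem G
  | cons p R ih =>
      by_cases hj : p.1 = j
      · simpa [leadProd, hj] using mul_mem (ih h.tail) (h p List.mem_cons_self).2
      · simp [leadProd, hj, one_mem]

lemma IsOver.singleton_sec_indexProd (hs : 1 ≤ s) (hss : SelfSimilar G) (h : IsOver s G R)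
    (x : Fin m) : IsOver s G [(s - 1, (indexProd R 0).sec [x])] := by
  rintro p hp
  rw [List.mem_singleton] at hp
  exact hp ▸ ⟨by omega, hss _ (h.indexProd_mem 0) [x]⟩

end

variable [NeZero m] (s : ℕ)

def eval : Word m → TreeAut m
  | [] => 1
  | p :: R => eval R * betaAut s p.1 p.2

/-- At `x`, the section of `β_0(g)` is `β_{s-1}(g|_x)`, and that of `β_i(g)`, `i ≠ 0`, is
`β_{i-1}(g)` if `x = 0` and trivial otherwise. -/
def sec : Word m → Fin m → Word m
  | [], _ => []
  | p :: R, x =>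
      if p.1 = 0 then (s - 1, p.2.sec [x]) :: sec R (p.2.label [] x)
      else if x = 0 then (p.1 - 1, p.2) :: sec R x else sec R x

/-- No letter of `R` is deleted by `sec s R x`. -/
def AllSurvive : Word m → Fin m → Prop
  | [], _ => True
  | p :: R, x => if p.1 = 0 then AllSurvive R (p.2.label [] x) else x = 0 ∧ AllSurvive R x

/-- The only direction in which all letters can survive, unless all have index `0`. -/
def dir (R : Word m) : Fin m := ((leadProd R 0).label [])⁻¹ 0

def next (R : Word m) : Word m := sec s R (dir R)

def IsStable (R : Word m) : Prop :=
  ∀ k, AllSurvive ((next s)^[k] R) (dir ((next s)^[k] R))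

variable {s}

@[simp] lemma eval_nil : eval s ([] : Word m) = 1 := rfl

@[simp] lemma eval_cons (p : ℕ × TreeAut m) (R : Word m) :
    eval s (p :: R) = eval s R * betaAut s p.1 p.2 := rfl

lemma eval_singleton (p : ℕ × TreeAut m) : eval s [p] = betaAut s p.1 p.2 := one_mul _

lemma eval_append (A B : Word m) : eval s (A ++ B) = eval s B * eval s A := by
  induction A with
  | nil => simp
  | cons p A ih => simp [ih, mul_assoc]

lemma eval_sec (R : Word m) (x : Fin m) : (eval s R).sec [x] = eval s (sec s R x) := by
  induction R generalizing x with
  | nil => rfl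
  | cons p R ih =>
      rw [eval_cons, TreeAut.mul_sec_singleton, betaAut_sec_singleton, betaAut_label_nil, ih]
      by_cases hi : p.1 = 0
      · simp [sec, hi]
      · by_cases hx : x = 0 <;> simp [sec, hi, hx]

lemma label_nil_eval (R : Word m) : (eval s R).label [] = (indexProd R 0).label [] := by
  induction R with
  | nil => rfl
  | cons p R ih =>
      rw [eval_cons, TreeAut.label_nil_mul, ih, betaAut_label_nil]
      by_cases hi : p.1 = 0 <;> simp [indexProd, hi]

lemma length_sec_le (R : Word m) (x : Fin m) : (sec s R x).length ≤ R.length := by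
  induction R generalizing x with
  | nil => simp [sec]
  | cons p R ih =>
      by_cases hi : p.1 = 0
      · simpa [sec, hi] using ih _
      · by_cases hx : x = 0
        · simpa [sec, hi, hx] using ih _
        · simpa [sec, hi, hx] using (ih x).trans (Nat.le_succ _)

lemma length_sec_lt {R : Word m} {x : Fin m} (h : ¬ AllSurvive R x) :
    (sec s R x).length < R.length := by
  induction R generalizing x with
  | nil => exact absurd trivial h
  | cons p R ih =>
      by_cases hi : p.1 = 0
      · simpa [sec, AllSurvive, hi] using ih (by simpa [AllSurvive, hi] using h)
      · by_cases hx : x = 0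
        · simpa [sec, hi, hx] using ih (by simpa [AllSurvive, hi, hx] using h)
        · simpa [sec, hi, hx] using Nat.lt_succ_of_le (length_sec_le R x)

lemma allSurvive_dir {R : Word m} {x : Fin m} (h : AllSurvive R x) : AllSurvive R (dir R) := by
  induction R generalizing x with
  | nil => trivial
  | cons p R ih =>
      by_cases hi : p.1 = 0
      · simp only [AllSurvive, hi, if_true] at h ⊢
        simpa [dir, leadProd, hi, TreeAut.label_nil_mul] using ih h
      · have hdir : dir (p :: R) = 0 := by simp [dir, leadProd, hi]
        simp only [AllSurvive, hi, if_false, hdir, true_and] at h ⊢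
        exact h.1 ▸ h.2

lemma eval_sec_of_ne {R : Word m} {x z : Fin m} (hz : AllSurvive R z) (hx : x ≠ z) :
    eval s (sec s R x) = eval s [(s - 1, (indexProd R 0).sec [x])] := by
  rw [eval_singleton]
  induction R generalizing x z with
  | nil => exact (betaAut_one s _).symm
  | cons p R ih =>
      by_cases hi : p.1 = 0
      · simp only [AllSurvive, hi, if_true] at hz
        have hx' : p.2.label [] x ≠ p.2.label [] z := (p.2.label []).injective.ne hx
        simp [sec, indexProd, hi, ih hz hx', ← betaAut_mul, TreeAut.mul_sec_singleton]
      · simp only [AllSurvive, hi, if_false] at hz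
        obtain ⟨rfl, hz⟩ := hz
        simp [sec, indexProd, hi, hx, ih hz hx]

lemma IsStable.allSurvive {R : Word m} (h : IsStable s R) : AllSurvive R (dir R) := h 0

lemma IsStable.next {R : Word m} (h : IsStable s R) : IsStable s (next s R) := fun k => by
  simpa only [Function.iterate_succ_apply] using h (k + 1)

lemma allSurvive_dir_of_length_le_one {R : Word m} (h : R.length ≤ 1) :
    AllSurvive R (dir R) := by
  match R, h with
  | [], _ => trivial
  | [p], _ =>
      by_cases hi : p.1 = 0
      · simp [AllSurvive, hi]
      · simp [AllSurvive, hi, dir, leadProd]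

lemma isStable_of_length_le_one {R : Word m} (h : R.length ≤ 1) : IsStable s R := by
  intro k
  induction k generalizing R with
  | zero => exact allSurvive_dir_of_length_le_one h
  | succ k ih =>
      rw [Function.iterate_succ_apply]
      exact ih ((length_sec_le R _).trans h)

lemma indexProd_sec_isShift {R : Word m} {x : Fin m} (hA : AllSurvive R x)
    (hR : ∀ p ∈ R, p.1 < s) : IsShift s x (indexProd (sec s R x)) (indexProd R) := by
  induction R generalizing x with
  | nil => exact ⟨fun _ _ => rfl, rfl⟩
  | cons p R ih =>
      have hp := hR p List.mem_cons_self
      have hR' := fun q hq => hR q (List.mem_cons_of_mem p hq)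
      by_cases hi : p.1 = 0
      · simp only [AllSurvive, hi, if_true] at hA
        obtain ⟨ih₁, ih₂⟩ := ih hA hR'
        refine ⟨fun j hj => ?_, ?_⟩
        · have : s - 1 ≠ j := by omega
          simp [sec, indexProd, hi, this, ih₁ j hj]
        · simp [sec, indexProd, hi, ih₂, TreeAut.mul_sec_singleton]
      · simp only [AllSurvive, hi, if_false] at hA
        obtain ⟨rfl, hA⟩ := hA
        obtain ⟨ih₁, ih₂⟩ := ih hA hR'
        refine ⟨fun j hj => ?_, ?_⟩
        · have : p.1 - 1 = j ↔ p.1 = j + 1 := by omega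
          simp [sec, indexProd, hi, this, ih₁ j hj]
        · have : p.1 - 1 ≠ s - 1 := by omega
          simp [sec, indexProd, hi, this, ih₂]

lemma leadProd_sec_isShift {R : Word m} {x : Fin m} (hA : AllSurvive R x)
    (hR : ∀ p ∈ R, p.1 < s) : IsShift s x (leadProd (sec s R x)) (leadProd R) := by
  induction R generalizing x with
  | nil => exact ⟨fun _ _ => rfl, rfl⟩
  | cons p R ih =>
      have hp := hR p List.mem_cons_self
      have hR' := fun q hq => hR q (List.mem_cons_of_mem p hq)
      by_cases hi : p.1 = 0
      · simp only [AllSurvive, hi, if_true] at hA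
        obtain ⟨-, ih₂⟩ := ih hA hR'
        refine ⟨fun j hj => ?_, ?_⟩
        · have : s - 1 ≠ j := by omega
          simp [sec, leadProd, hi, this]
        · simp [sec, leadProd, hi, ih₂, TreeAut.mul_sec_singleton]
      · simp only [AllSurvive, hi, if_false] at hA
        obtain ⟨rfl, hA⟩ := hA
        obtain ⟨ih₁, -⟩ := ih hA hR'
        refine ⟨fun j hj => ?_, ?_⟩
        · have : p.1 - 1 = j ↔ p.1 = j + 1 := by omega
          simp [sec, leadProd, hi, this, ih₁ j hj]
        · have : p.1 - 1 ≠ s - 1 := by omega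
          simp [sec, leadProd, hi, this]

section IsOver

variable {G : Subgroup (TreeAut m)} {R : Word m}

lemma IsOver.sec (hs : 1 ≤ s) (hss : SelfSimilar G) (h : IsOver s G R) (x : Fin m) :
    IsOver s G (sec s R x) := by
  induction R generalizing x with
  | nil => exact fun _ hq => absurd hq List.not_mem_nil
  | cons p R ih =>
      have ⟨hps, hpG⟩ := h p List.mem_cons_self
      intro q hq
      by_cases hi : p.1 = 0
      · simp only [Word.sec, hi, if_true, List.mem_cons] at hq
        rcases hq with rfl | hq
        exacts [⟨by omega, hss _ hpG _⟩, ih h.tail _ q hq]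
      · by_cases hx : x = 0
        · simp only [Word.sec, hi, hx, if_true, if_false, List.mem_cons] at hq
          rcases hq with rfl | hq
          exacts [⟨by omega, hpG⟩, ih h.tail _ q hq]
        · simp only [Word.sec, hi, hx, if_false] at hq
          exact ih h.tail _ q hq

lemma sec_index_lt (hs : 1 ≤ s) (h : ∀ p ∈ R, p.1 < s) (x : Fin m) :
    ∀ p ∈ sec s R x, p.1 < s := fun p hp =>
  (IsOver.sec (G := ⊤) hs (fun _ _ _ => trivial) (fun q hq => ⟨h q hq, trivial⟩) x p hp).1

lemma IsOver.eval_mem_basilica (h : IsOver s G R) : eval s R ∈ basilica s G := by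
  induction R with
  | nil => exact one_mem _
  | cons p R ih =>
      have ⟨hps, hpG⟩ := h p List.mem_cons_self
      exact mul_mem (ih h.tail) (Subgroup.subset_closure ⟨p.2, hpG, p.1, hps, rfl⟩)

lemma exists_isOver_eval_eq {b : TreeAut m} (hb : b ∈ basilica s G) :
    ∃ R : Word m, IsOver s G R ∧ eval s R = b := by
  induction hb using Subgroup.closure_induction_left with
  | one => exact ⟨[], fun _ hq => absurd hq List.not_mem_nil, rfl⟩
  | mul_left _ hx _ _ ih =>
      obtain ⟨g, hg, i, hi, rfl⟩ := hx
      obtain ⟨R, hR, rfl⟩ := ih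
      refine ⟨R ++ [(i, g)], fun q hq => ?_, by rw [eval_append, eval_singleton]⟩
      rcases List.mem_append.1 hq with hq | hq
      exacts [hR q hq, by simp_all]
  | inv_mul_cancel _ hx _ _ ih =>
      obtain ⟨g, hg, i, hi, rfl⟩ := hx
      obtain ⟨R, hR, rfl⟩ := ih
      refine ⟨R ++ [(i, g⁻¹)], fun q hq => ?_, by rw [eval_append, eval_singleton, betaAut_inv]⟩
      rcases List.mem_append.1 hq with hq | hq
      exacts [hR q hq, by simp_all]

end IsOver

lemma eval_eq_of_prod_eq (hs : 1 ≤ s) {R R' : Word m} (hR : ∀ p ∈ R, p.1 < s)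
    (hR' : ∀ p ∈ R', p.1 < s) (hst : IsStable s R) (hst' : IsStable s R')
    (hlead : ∀ j < s, leadProd R j = leadProd R' j)
    (hindex : ∀ j < s, indexProd R j = indexProd R' j) : eval s R = eval s R' := by
  refine TreeAut.ext_label fun u => ?_
  induction u generalizing R R' with
  | nil => rw [label_nil_eval, label_nil_eval, hindex 0 hs]
  | cons x u ih =>
      rw [TreeAut.label_cons, TreeAut.label_cons, eval_sec, eval_sec]
      have hdir : dir R = dir R' := by rw [dir, dir, hlead 0 hs]
      by_cases hx : x = dir R
      · rw [hx]
        conv_rhs => rw [hdir]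
        exact ih (sec_index_lt hs hR _) (sec_index_lt hs hR' _) hst.next hst'.next
          ((leadProd_sec_isShift hst.allSurvive hR).eq_of_eq
            (leadProd_sec_isShift hst'.allSurvive hR') hdir hlead)
          ((indexProd_sec_isShift hst.allSurvive hR).eq_of_eq
            (indexProd_sec_isShift hst'.allSurvive hR') hdir hindex)
      · rw [eval_sec_of_ne hst.allSurvive hx, eval_sec_of_ne hst'.allSurvive (hdir ▸ hx),
          hindex 0 hs]

end Word

section Nucleus

open Word

variable [NeZero m] {s : ℕ} {G : Subgroup (TreeAut m)} {N : Set (TreeAut m)}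

variable (s G N) in
def stableNucleus : Set (TreeAut m) :=
  {h | ∃ R : Word m, R.IsOver s G ∧ R.IsStable s ∧
    (∀ j < s, R.leadProd j ∈ N ∧ R.indexProd j ∈ N) ∧ R.eval s = h}

lemma stableNucleus_subset_basilica : stableNucleus s G N ⊆ basilica s G := by
  rintro _ ⟨R, hR, -, -, rfl⟩
  exact hR.eval_mem_basilica

lemma stableNucleus_finite (hs : 1 ≤ s) (hN : N.Finite) : (stableNucleus s G N).Finite := by
  let state : Word m → Fin s → TreeAut m × TreeAut m := fun R j => (leadProd R j, indexProd R j)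
  have hfiber : ∀ σ, {h | ∃ R : Word m, (∀ p ∈ R, p.1 < s) ∧ IsStable s R ∧ state R = σ ∧
      eval s R = h}.Subsingleton := by
    rintro σ _ ⟨R, hR, hst, rfl, rfl⟩ _ ⟨R', hR', hst', hσ, rfl⟩
    exact eval_eq_of_prod_eq hs hR hR' hst hst'
      (fun j hj => (congr_arg Prod.fst (congr_fun hσ ⟨j, hj⟩)).symm)
      (fun j hj => (congr_arg Prod.snd (congr_fun hσ ⟨j, hj⟩)).symm)
  refine ((Set.Finite.pi' fun _ => hN.prod hN).biUnion fun σ _ => (hfiber σ).finite).subset ?_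
  rintro _ ⟨R, hR, hst, hRN, rfl⟩
  exact Set.mem_biUnion (x := state R) (fun j => hRN j j.2)
    ⟨R, fun p hp => (hR p hp).1, hst, rfl, rfl⟩

lemma sec_eval_mem_stableNucleus (hs : 1 ≤ s) (hss : SelfSimilar G) (hN1 : 1 ∈ N)
    (v : List (Fin m)) {R : Word m} (hR : IsOver s G R) (hst : IsStable s R)
    (hlead : DeepSectionsIn s N v.length (leadProd R))
    (hindex : DeepSectionsIn s N v.length (indexProd R)) :
    (eval s R).sec v ∈ stableNucleus s G N := by
  induction v generalizing R with
  | nil => exact ⟨R, hR, hst, fun j hj => ⟨hlead.mem hj, hindex.mem hj⟩, rfl⟩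
  | cons x v ih =>
      have hidx : ∀ p ∈ R, p.1 < s := fun p hp => (hR p hp).1
      rw [TreeAut.sec_cons, eval_sec]
      by_cases hx : x = dir R
      · subst hx
        exact ih (hR.sec hs hss _) hst.next
          (hlead.of_isShift (leadProd_sec_isShift hst.allSurvive hidx))
          (hindex.of_isShift (indexProd_sec_isShift hst.allSurvive hidx))
      · rw [eval_sec_of_ne hst.allSurvive hx]
        have hsingle := hindex.single (x := x) hN1
        exact ih (hR.singleton_sec_indexProd hs hss x) (isStable_of_length_le_one (by simp))
          (leadProd_singleton (s - 1) _ ▸ hsingle) (indexProd_singleton (s - 1) _ ▸ hsingle)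

lemma sectionsEventuallyIn_eval_of_isStable (hs : 1 ≤ s) (hss : SelfSimilar G)
    (hN : ∀ g ∈ G, SectionsEventuallyIn N g) {R : Word m} (hR : IsOver s G R)
    (hst : IsStable s R) : SectionsEventuallyIn (stableNucleus s G N) (eval s R) := by
  obtain ⟨n₁, hlead⟩ := exists_deepSectionsIn fun j _ => hN _ (hR.leadProd_mem j)
  obtain ⟨n₂, hindex⟩ := exists_deepSectionsIn fun j _ => hN _ (hR.indexProd_mem j)
  have hN1 := one_mem_of_sectionsEventuallyIn (hN 1 (one_mem G))
  exact ⟨max n₁ n₂, fun v hv => sec_eval_mem_stableNucleus hs hss hN1 v hR hst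
    (hlead.mono (by omega)) (hindex.mono (by omega))⟩

lemma sectionsEventuallyIn_eval_of_next (hs : 1 ≤ s) (hss : SelfSimilar G)
    (hN : ∀ g ∈ G, SectionsEventuallyIn N g) {R : Word m} (hR : IsOver s G R)
    (hIH : ∀ R' : Word m, IsOver s G R' → R'.length < R.length →
      SectionsEventuallyIn (stableNucleus s G N) (eval s R'))
    (hnext : AllSurvive R (dir R) →
      SectionsEventuallyIn (stableNucleus s G N) (eval s (next s R))) :
    SectionsEventuallyIn (stableNucleus s G N) (eval s R) := by
  refine sectionsEventuallyIn_of_forall_sec fun x => ?_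
  rw [eval_sec]
  by_cases hA : AllSurvive R (dir R)
  · by_cases hx : x = dir R
    · exact hx ▸ hnext hA
    · rw [eval_sec_of_ne hA hx]
      exact sectionsEventuallyIn_eval_of_isStable hs hss hN
        (hR.singleton_sec_indexProd hs hss x) (isStable_of_length_le_one (by simp))
  · exact hIH _ (hR.sec hs hss x) (length_sec_lt fun h => hA (allSurvive_dir h))

lemma sectionsEventuallyIn_eval_of_not_allSurvive (hs : 1 ≤ s) (hss : SelfSimilar G)
    (hN : ∀ g ∈ G, SectionsEventuallyIn N g) {L : ℕ}
    (hIH : ∀ R' : Word m, IsOver s G R' → R'.length < L →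
      SectionsEventuallyIn (stableNucleus s G N) (eval s R')) (k : ℕ) :
    ∀ R : Word m, IsOver s G R → R.length ≤ L →
      ¬ AllSurvive ((next s)^[k] R) (dir ((next s)^[k] R)) →
      SectionsEventuallyIn (stableNucleus s G N) (eval s R) := by
  induction k with
  | zero =>
      intro R hR hL hk
      exact sectionsEventuallyIn_eval_of_next hs hss hN hR
        (fun R' hR' hlt => hIH R' hR' (by omega)) (absurd · hk)
  | succ k ih =>
      intro R hR hL hk
      rw [Function.iterate_succ_apply] at hk
      exact sectionsEventuallyIn_eval_of_next hs hss hN hR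
        (fun R' hR' hlt => hIH R' hR' (by omega))
        (fun _ => ih _ (hR.sec hs hss _) ((length_sec_le _ _).trans hL) hk)

theorem sectionsEventuallyIn_eval (hs : 1 ≤ s) (hss : SelfSimilar G)
    (hN : ∀ g ∈ G, SectionsEventuallyIn N g) (R : Word m) (hR : IsOver s G R) :
    SectionsEventuallyIn (stableNucleus s G N) (eval s R) := by
  induction hL : R.length using Nat.strong_induction_on generalizing R with
  | _ L ih =>
      by_cases hst : IsStable s R
      · exact sectionsEventuallyIn_eval_of_isStable hs hss hN hR hst
      · obtain ⟨k, hk⟩ := not_forall.1 hst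
        exact sectionsEventuallyIn_eval_of_not_allSurvive hs hss hN
          (fun R' hR' hlt => ih _ hlt R' hR' rfl) k R hR hL.le hk

end Nucleus

theorem basilica_contracting_general {m : ℕ} [NeZero m]
    (G : Subgroup (TreeAut m)) (hss : SelfSimilar G) (hc : Contracting G)
    (s : ℕ) (hs : 1 ≤ s) :
    Contracting (basilica s G) := by
  obtain ⟨N, hNfin, -, hN⟩ := hc
  refine ⟨stableNucleus s G N, stableNucleus_finite hs hNfin, stableNucleus_subset_basilica,
    fun b hb => ?_⟩
  obtain ⟨R, hR, rfl⟩ := Word.exists_isOver_eval_eq hb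
  exact sectionsEventuallyIn_eval hs hss hN R hR

/-- If `G ≤ Aut(T)` is self-similar and contracting, then for every
`s ≥ 1` the `s`-th Basilica group `Bas_s(G)` is contracting. -/
theorem basilica_contracting {m : ℕ} [NeZero m] (hm : 2 ≤ m)
    (G : Subgroup (TreeAut m)) (hss : SelfSimilar G) (hc : Contracting G)
    (s : ℕ) (hs : 1 ≤ s) :
    Contracting (basilica s G) :=
  basilica_contracting_general G hss hc s hs

end Basilica
end
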